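/- Let G be a simple graph and e ∈ E(G). If the contraction G/e contains an induced cycle C_4, then G contains an induced C_4 or an induced C_5. -/

import Mathlib

open SimpleGraph

/-- Contraction of the edge between adjacent vertices `u` and `v`:
`v` is merged into `u`, so the vertex set is `V \ {v}`, and `u` inherits
the neighbours of `v`; loops and multiple edges are removed. -/
def SimpleGraph.contractEdge {V : Type*} (G : SimpleGraph V) (u v : V) :
    SimpleGraph {x : V // x ≠ v} where
  Adj a b := a ≠ b ∧
    (G.Adj a.1 b.1 ∨ (a.1 = u ∧ G.Adj v b.1) ∨ (b.1 = u ∧ G.Adj v a.1))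
  symm := by
    constructor
    rintro a b ⟨hab, h⟩
    refine ⟨hab.symm, ?_⟩
    rcases h with h | ⟨h1, h2⟩ | ⟨h1, h2⟩
    · exact Or.inl h.symm
    · exact Or.inr (Or.inr ⟨h1, h2⟩)
    · exact Or.inr (Or.inl ⟨h1, h2⟩)
  loopless := by constructor; rintro a ⟨hab, -⟩; exact hab rfl

/-- `G` contains an induced subgraph isomorphic to `H`. -/
def SimpleGraph.HasInduced {V W : Type*} (G : SimpleGraph V) (H : SimpleGraph W) : Prop :=
  ∃ S : Set V, Nonempty (G.induce S ≃g H)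

/-- A set of vertices is independent if its vertices are pairwise nonadjacent. -/
def SimpleGraph.IsIndependentSet {V : Type*} (G : SimpleGraph V) (S : Set V) : Prop :=
  S.Pairwise fun a b => ¬ G.Adj a b

/-! If `u` is not on the induced `C₄` of `G/uv`, the same four vertices induce a `C₄` in `G`.
Otherwise the cycle reads `u b c d`, where `c` is adjacent to neither `u` nor `v` in `G` and each
of `b`, `d` is adjacent to `u` or to `v`. If one of `u`, `v` is adjacent to both `b` and `d`, it
closes an induced `C₄` with `b c d`; if not, one of them sees only `b` and the other only `d`, and
`u b c d v` is an induced `C₅`. -/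

namespace SimpleGraph

variable {V W : Type*} {G : SimpleGraph V}

theorem hasInduced_iff_isIndContained {H : SimpleGraph W} : G.HasInduced H ↔ H ⊴ G := by
  rw [isIndContained_iff_exists_iso_induce]
  exact exists_congr fun _ => ⟨fun ⟨e⟩ => ⟨e.symm⟩, fun ⟨e⟩ => ⟨e.symm⟩⟩

theorem cycleGraph_adj_add_left {n : ℕ} [NeZero n] {k i j : Fin n} :
    (cycleGraph n).Adj (k + i) (k + j) ↔ (cycleGraph n).Adj i j := by
  simp only [cycleGraph_adj', add_sub_add_left_eq_sub]

theorem cycleGraph_four_isIndContained {a b c d : V} (hab : G.Adj a b) (hbc : G.Adj b c)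
    (hcd : G.Adj c d) (hda : G.Adj d a) (hac : a ≠ c) (hbd : b ≠ d)
    (hac' : ¬ G.Adj a c) (hbd' : ¬ G.Adj b d) : cycleGraph 4 ⊴ G := by
  refine ⟨⟨⟨![a, b, c, d], fun i j hij => ?_⟩, fun {i j} => ?_⟩⟩
  · fin_cases i <;> fin_cases j <;> simp_all [eq_comm, G.adj_comm]
  · show G.Adj (![a, b, c, d] i) (![a, b, c, d] j) ↔ _
    fin_cases i <;> fin_cases j <;> simp_all +decide [G.adj_comm]

theorem cycleGraph_five_isIndContained {a b c d e : V} (hab : G.Adj a b) (hbc : G.Adj b c)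
    (hcd : G.Adj c d) (hde : G.Adj d e) (hea : G.Adj e a) (hac : ¬ G.Adj a c)
    (had : ¬ G.Adj a d) (hbd : ¬ G.Adj b d) (hbe : ¬ G.Adj b e) (hce : ¬ G.Adj c e) :
    cycleGraph 5 ⊴ G := by
  refine ⟨⟨⟨![a, b, c, d, e], fun i j hij => ?_⟩, fun {i j} => ?_⟩⟩
  · fin_cases i <;> fin_cases j <;> simp_all [eq_comm, G.adj_comm]
  · show G.Adj (![a, b, c, d, e] i) (![a, b, c, d, e] j) ↔ _
    fin_cases i <;> fin_cases j <;> simp_all +decide [G.adj_comm]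

theorem cycleGraph_four_or_five_isIndContained {u v b c d : V} (huv : G.Adj u v)
    (hub : G.Adj u b ∨ G.Adj v b) (hud : G.Adj u d ∨ G.Adj v d) (hbc : G.Adj b c)
    (hcd : G.Adj c d) (huc : ¬ G.Adj u c) (hvc : ¬ G.Adj v c) (hbd : b ≠ d)
    (hbd' : ¬ G.Adj b d) : cycleGraph 4 ⊴ G ∨ cycleGraph 5 ⊴ G := by
  have hcu : u ≠ c := by rintro rfl; exact hvc huv.symm
  have hcv : v ≠ c := by rintro rfl; exact huc huv
  by_cases hu : G.Adj u b ∧ G.Adj u d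
  · exact .inl (cycleGraph_four_isIndContained hu.1 hbc hcd hu.2.symm hcu hbd huc hbd')
  by_cases hv : G.Adj v b ∧ G.Adj v d
  · exact .inl (cycleGraph_four_isIndContained hv.1 hbc hcd hv.2.symm hcv hbd hvc hbd')
  wlog hub' : G.Adj u b generalizing u v
  · exact this huv.symm hub.symm hud.symm hvc huc hcv hcu hv hu (hub.resolve_left hub')
  have hud' : ¬ G.Adj u d := fun h => hu ⟨hub', h⟩
  have hvd : G.Adj v d := hud.resolve_left hud'
  exact .inr (cycleGraph_five_isIndContained hub' hbc hcd hvd.symm huv.symm huc hud' hbd'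
    (fun h => hv ⟨h.symm, hvd⟩) (fun h => hvc h.symm))

variable {u v : V}

theorem contractEdge_adj_iff_of_ne {a b : {x // x ≠ v}} (ha : a.1 ≠ u) (hb : b.1 ≠ u) :
    (G.contractEdge u v).Adj a b ↔ G.Adj a b := by
  simp only [contractEdge, ha, hb, false_and, or_false, and_iff_right_iff_imp]
  rintro h rfl
  exact h.ne rfl

theorem contractEdge_adj_iff_of_eq {a b : {x // x ≠ v}} (ha : a.1 = u) (hb : b.1 ≠ u) :
    (G.contractEdge u v).Adj a b ↔ G.Adj u b ∨ G.Adj v b := by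
  simp only [contractEdge, ha, hb, true_and, false_and, or_false, and_iff_right_iff_imp]
  rintro - rfl
  exact hb ha

theorem isIndContained_of_contractEdge {H : SimpleGraph W} (ψ : H ↪g G.contractEdge u v)
    (hu : ∀ x, (ψ x).1 ≠ u) : H ⊴ G :=
  ⟨⟨⟨fun x => ψ x, fun _ _ h => ψ.injective (Subtype.ext h)⟩,
    (contractEdge_adj_iff_of_ne (hu _) (hu _)).symm.trans ψ.map_rel_iff⟩⟩

theorem cycleGraph_four_or_five_isIndContained_of_contractEdge (huv : G.Adj u v)
    (ψ : cycleGraph 4 ↪g G.contractEdge u v) {k : Fin 4} (hk : (ψ k).1 = u) :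
    cycleGraph 4 ⊴ G ∨ cycleGraph 5 ⊴ G := by
  set w : Fin 4 → V := fun i => ψ (k + i)
  have hw : ∀ i j, i ≠ j → w i ≠ w j := fun _ _ hij h =>
    hij (add_left_cancel (ψ.injective (Subtype.ext h)))
  have hw0 : w 0 = u := by simpa [w] using hk
  have hu : ∀ {i}, i ≠ 0 → w i ≠ u := fun hi => hw0 ▸ hw _ _ hi
  have hψ : ∀ {i j},
      (cycleGraph 4).Adj i j ↔ (G.contractEdge u v).Adj (ψ (k + i)) (ψ (k + j)) :=
    cycleGraph_adj_add_left.symm.trans ψ.map_rel_iff.symm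
  have adj_u : ∀ i, i ≠ 0 → ((cycleGraph 4).Adj 0 i ↔ G.Adj u (w i) ∨ G.Adj v (w i)) :=
    fun _ hi => hψ.trans (contractEdge_adj_iff_of_eq hw0 (hu hi))
  have adj : ∀ i j, i ≠ 0 → j ≠ 0 → ((cycleGraph 4).Adj i j ↔ G.Adj (w i) (w j)) :=
    fun _ _ hi hj => hψ.trans (contractEdge_adj_iff_of_ne (hu hi) (hu hj))
  have hb := (adj_u 1 (by decide)).1 (by decide)
  have hd := (adj_u 3 (by decide)).1 (by decide)
  have hc := not_or.1 ((adj_u 2 (by decide)).not.1 (by decide))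
  have hbc := (adj 1 2 (by decide) (by decide)).1 (by decide)
  have hcd := (adj 2 3 (by decide) (by decide)).1 (by decide)
  have hbd := (adj 1 3 (by decide) (by decide)).not.1 (by decide)
  exact cycleGraph_four_or_five_isIndContained huv hb hd hbc hcd hc.1 hc.2 (hw 1 3 (by decide)) hbd

end SimpleGraph

theorem stmt11_general {V : Type*} (G : SimpleGraph V)
    (u v : V) (huv : G.Adj u v)
    (h : (G.contractEdge u v).HasInduced (cycleGraph 4)) :
    G.HasInduced (cycleGraph 4) ∨ G.HasInduced (cycleGraph 5) := by
  simp only [hasInduced_iff_isIndContained] at h ⊢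
  obtain ⟨ψ⟩ := h
  by_cases hu : ∃ k, (ψ k).1 = u
  · obtain ⟨k, hk⟩ := hu
    exact cycleGraph_four_or_five_isIndContained_of_contractEdge huv ψ hk
  · exact .inl (isIndContained_of_contractEdge ψ fun k hk => hu ⟨k, hk⟩)

/-- Claim 12.6. If an edge contraction of `G` has an induced `C₄`,
then `G` has an induced `C₄` or an induced `C₅`. -/
theorem stmt11 {V : Type*} [Fintype V] [DecidableEq V] (G : SimpleGraph V)
    (u v : V) (huv : G.Adj u v)
    (h : (G.contractEdge u v).HasInduced (cycleGraph 4)) :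
    G.HasInduced (cycleGraph 4) ∨ G.HasInduced (cycleGraph 5) :=
  stmt11_general G u v huv h
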